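/- Let Q be a weight list which contracts to a smooth point and contains a unique (−1)-curve. If K·Q = 1, then, up to reversal, Q = [(2)_k, 4, 1, 2, 2] or Q = [(2)_k, 3, 2, 1, 3] for some integer k ≥ 0. -/

import Mathlib

/-- One contraction move on a weight list: an entry equal to `1` (representing a
`(-1)`-curve) is removed and the weights of its neighbours are decreased by one. -/
inductive ContractionStep : List ℤ → List ℤ → Prop
  | mid (L R : List ℤ) (a b : ℤ) :
      ContractionStep (L ++ a :: 1 :: b :: R) (L ++ (a - 1) :: (b - 1) :: R)
  | head (b : ℤ) (R : List ℤ) :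
      ContractionStep (1 :: b :: R) ((b - 1) :: R)
  | last (L : List ℤ) (a : ℤ) :
      ContractionStep (L ++ [a, 1]) (L ++ [a - 1])
  | single : ContractionStep [1] []

/-- A weight list contracts to a smooth point if some finite sequence of
contraction moves transforms it into the empty list. -/
def ContractsToPoint (Q : List ℤ) : Prop :=
  Relation.ReflTransGen ContractionStep Q []

/-- `K·Q = Σᵢ (aᵢ - 2)`, the intersection of the chain with the canonical divisor. -/
def kDot (Q : List ℤ) : ℤ := (Q.map (fun a => a - 2)).sum

lemma kDot_nil : kDot ([] : List ℤ) = 0 := rfl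

lemma kDot_cons (x : ℤ) (l : List ℤ) : kDot (x :: l) = x - 2 + kDot l := by
  simp [kDot]

lemma kDot_append (L M : List ℤ) : kDot (L ++ M) = kDot L + kDot M := by
  simp [kDot]

lemma step_one_mem {Q Q' : List ℤ} (h : ContractionStep Q Q') : (1:ℤ) ∈ Q := by
  cases h <;> simp

lemma ctp_one_mem {Q : List ℤ} (h : ContractsToPoint Q) (hne : Q ≠ []) : (1:ℤ) ∈ Q := by
  rcases Relation.ReflTransGen.cases_head h with h0 | ⟨Q', hs, _⟩
  · exact absurd h0 hne
  · exact step_one_mem hs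

lemma ctp_kge {Q : List ℤ} (h : ContractsToPoint Q) : Q = [] ∨ -1 ≤ kDot Q := by
  induction h using Relation.ReflTransGen.head_induction_on with
  | refl => exact Or.inl rfl
  | head hs _ ih =>
    right
    cases hs with
    | mid L R a b =>
      rcases ih with h0 | h0
      · simp at h0
      · simp only [kDot_append, kDot_cons] at h0 ⊢; omega
    | head b R =>
      rcases ih with h0 | h0
      · simp at h0
      · simp only [kDot_cons] at h0 ⊢; omega
    | last L a =>
      rcases ih with h0 | h0
      · simp at h0
      · simp only [kDot_append, kDot_cons, kDot_nil] at h0 ⊢; omega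
    | single => simp [kDot]

def Good (Q : List ℤ) : Prop :=
  (∀ x ∈ Q, 1 ≤ x) ∧ Q.Chain' (fun x y => 3 ≤ x + y)

lemma ctp_good {Q : List ℤ} (h : ContractsToPoint Q) : Good Q := by
  induction h using Relation.ReflTransGen.head_induction_on with
  | refl => exact ⟨by simp, by simp [List.Chain']⟩
  | head hs _ ih =>
    obtain ⟨ih1, ih2⟩ := ih
    cases hs with
    | mid L R a b =>
      have ha : 1 ≤ a - 1 := ih1 (a-1) (by simp)
      have hb : 1 ≤ b - 1 := ih1 (b-1) (by simp)
      rw [List.Chain', List.isChain_append] at ih2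
      obtain ⟨c1, c2, c3⟩ := ih2
      rw [List.isChain_cons_cons, List.isChain_cons] at c2
      obtain ⟨p1, p2, p3⟩ := c2
      constructor
      · intro x hx
        simp only [List.mem_append, List.mem_cons] at hx
        rcases hx with h | h | h | h | h
        · exact ih1 x (by simp [h])
        · omega
        · omega
        · omega
        · exact ih1 x (by simp [h])
      · rw [List.Chain', List.isChain_append, List.isChain_cons_cons, List.isChain_cons_cons, List.isChain_cons]
        refine ⟨c1, ⟨by omega, by omega, ?_, p3⟩, ?_⟩
        · intro y hy
          have := p2 y hy
          omega
        · intro x hx y hy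
          have := c3 x hx (a-1) (by simp)
          simp only [List.head?_cons, Option.mem_def, Option.some_inj] at hy
          omega
    | head b R =>
      have hb : 1 ≤ b - 1 := ih1 (b-1) (by simp)
      rw [List.Chain', List.isChain_cons] at ih2
      obtain ⟨p2, p3⟩ := ih2
      constructor
      · intro x hx
        simp only [List.mem_cons] at hx
        rcases hx with h | h | h
        · omega
        · omega
        · exact ih1 x (by simp [h])
      · rw [List.Chain', List.isChain_cons_cons, List.isChain_cons]
        refine ⟨by omega, ?_, p3⟩
        intro y hy
        have := p2 y hy
        omega
    | last L a =>
      have ha : 1 ≤ a - 1 := ih1 (a-1) (by simp)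
      rw [List.Chain', List.isChain_append] at ih2
      obtain ⟨c1, _, c3⟩ := ih2
      constructor
      · intro x hx
        simp only [List.mem_append, List.mem_cons] at hx
        rcases hx with h | h | h
        · exact ih1 x (by simp [h])
        · omega
        · simp at h; omega
      · rw [List.Chain', List.isChain_append]
        refine ⟨c1, by simp; omega, ?_⟩
        intro x hx y hy
        have := c3 x hx (a-1) (by simp)
        simp only [List.head?_cons, Option.mem_def, Option.some_inj] at hy
        omega
    | single => exact ⟨by simp, by simp [List.Chain']⟩

lemma split_one : ∀ {L A M B : List ℤ}, (1:ℤ) ∉ L → (1:ℤ) ∉ A → L ++ 1 :: M = A ++ 1 :: B → L = A ∧ M = B := by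
  intro L
  induction L with
  | nil =>
    intro A M B _ hA h
    cases A with
    | nil => simpa using h
    | cons x A' =>
      simp only [List.nil_append, List.cons_append, List.cons.injEq] at h
      exact absurd (h.1.symm ▸ List.mem_cons_self (a := x) (l := A')) (by simp_all)
  | cons x L' ih =>
    intro A M B hL hA h
    cases A with
    | nil =>
      simp only [List.cons_append, List.nil_append, List.cons.injEq] at h
      exact absurd (h.1 ▸ List.mem_cons_self (a := x) (l := L')) (by simp_all)
    | cons y A' =>
      simp only [List.cons_append, List.cons.injEq] at h
      obtain ⟨rfl, h2⟩ := h
      have := ih (by simp_all) (by simp_all) h2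
      simp [this.1, this.2]

lemma count_mid {L R : List ℤ} {a b : ℤ} (h : (L ++ a :: 1 :: b :: R).count 1 = 1) :
    (1:ℤ) ∉ L ∧ a ≠ 1 ∧ b ≠ 1 ∧ (1:ℤ) ∉ R := by
  simp only [List.count_append, List.count_cons, beq_iff_eq] at h
  split_ifs at h <;>
    refine ⟨List.count_eq_zero.mp (by omega), by omega, by omega,
      List.count_eq_zero.mp (by omega)⟩

-- helper: extract count facts for end patterns
lemma count_head {b : ℤ} {R : List ℤ} (hc : ((1:ℤ) :: b :: R).count 1 = 1) :
    b ≠ 1 ∧ (1:ℤ) ∉ R := by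
  rw [show (1:ℤ) :: b :: R = [1] ++ b :: R from rfl, List.count_append] at hc
  have h1 : ([1] : List ℤ).count 1 = 1 := by simp
  have h2 : (b :: R).count 1 = 0 := by omega
  have h3 := List.count_eq_zero.mp h2
  simp only [List.mem_cons, not_or] at h3
  exact ⟨fun h => h3.1 h.symm, h3.2⟩

lemma count_last {L : List ℤ} {a : ℤ} (hc : (L ++ [a, 1]).count 1 = 1) :
    (1:ℤ) ∉ L ∧ a ≠ 1 := by
  rw [show L ++ [a, 1] = L ++ [a] ++ [1] by simp, List.count_append, List.count_append] at hc
  have h1 : ([1] : List ℤ).count 1 = 1 := by simp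
  have h2 : L.count 1 = 0 ∧ ([a] : List ℤ).count 1 = 0 := by omega
  refine ⟨List.count_eq_zero.mp h2.1, ?_⟩
  have h4 := List.count_eq_zero.mp h2.2
  simp only [List.mem_singleton] at h4
  exact fun h => h4 h.symm

-- classification of contractible chains with K = -1 and a unique (-1)-curve
lemma lemM {Q : List ℤ} (h : ContractsToPoint Q) :
    Q.count 1 = 1 → kDot Q = -1 →
    ∃ k : ℕ, Q = 1 :: List.replicate k 2 ∨ Q = List.replicate k 2 ++ [1] := by
  induction h using Relation.ReflTransGen.head_induction_on with
  | refl => intro hc _; simp at hc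
  | head hs hQ' ih =>
    intro hc hk
    cases hs with
    | mid L R a b =>
      exfalso
      rcases ctp_kge hQ' with h0 | h0
      · simp at h0
      · simp only [kDot_append, kDot_cons] at hk h0
        omega
    | head b R =>
      obtain ⟨hb1, hR⟩ := count_head hc
      by_cases hb2 : b = 2
      · subst hb2
        norm_num at ih hQ' ⊢
        obtain ⟨k, hQ | hQ⟩ := ih
          (by simp [List.count_cons, List.count_eq_zero.mpr hR])
          (by simp only [kDot_cons] at hk ⊢; omega)
        · subst hQ
          exact ⟨k + 1, Or.inl (by simp [List.replicate_succ])⟩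
        · cases k with
          | zero =>
            simp only [List.replicate_zero, List.nil_append, List.cons.injEq] at hQ
            exact ⟨1, Or.inl (by simp [hQ.2])⟩
          | succ j =>
            rw [List.replicate_succ] at hQ
            simp at hQ
      · exfalso
        have h1 : (1:ℤ) ∈ (b-1) :: R := ctp_one_mem hQ' (by simp)
        simp only [List.mem_cons] at h1
        rcases h1 with h1 | h1
        · omega
        · exact hR h1
    | last L a =>
      obtain ⟨hL, ha1⟩ := count_last hc
      by_cases ha2 : a = 2
      · subst ha2
        norm_num at ih hQ' ⊢
        obtain ⟨k, hQ | hQ⟩ := ih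
          (by simp [List.count_append, List.count_cons, List.count_eq_zero.mpr hL])
          (by simp only [kDot_append, kDot_cons, kDot_nil] at hk ⊢; omega)
        · obtain ⟨rfl, h2⟩ := split_one hL (by simp)
            (by simpa using hQ : L ++ 1 :: [] = [] ++ 1 :: List.replicate k 2)
          cases k with
          | zero => exact ⟨1, Or.inr (by simp)⟩
          | succ j => simp [List.replicate_succ] at h2
        · obtain ⟨rfl, -⟩ := split_one hL (by simp)
            (by simpa using hQ : L ++ 1 :: [] = List.replicate k 2 ++ 1 :: [])
          refine ⟨k + 1, Or.inr ?_⟩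
          rw [List.replicate_succ']
          simp
      · exfalso
        have h1 : (1:ℤ) ∈ L ++ [a-1] := ctp_one_mem hQ' (by simp)
        simp only [List.mem_append, List.mem_cons] at h1
        rcases h1 with h1 | h1
        · exact hL h1
        · simp at h1; omega
    | single => exact ⟨0, Or.inl (by simp)⟩

lemma concat_inj {L M : List ℤ} {x y : ℤ} (h : L ++ [x] = M ++ [y]) : L = M ∧ x = y := by
  have := List.append_inj' h rfl
  exact ⟨this.1, by simpa using this.2⟩

lemma ne_head_Z1 (k : ℕ) (R : List ℤ) : (1:ℤ) :: R ≠ [2, 1, 3] ++ List.replicate k 2 := by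
  intro h; simp at h

lemma ne_head_Z2 (k : ℕ) (R : List ℤ) : (1:ℤ) :: R ≠ List.replicate k 2 ++ [3, 1, 2] := by
  cases k with
  | zero => simp
  | succ j => rw [List.replicate_succ]; simp

lemma ne_last_Z1 (k : ℕ) (L : List ℤ) : L ++ [1] ≠ [2, 1, 3] ++ List.replicate k 2 := by
  intro h
  cases k with
  | zero =>
    have := (concat_inj (M := [2,1]) (by simpa using h)).2
    omega
  | succ j =>
    have h2 : L ++ [1] = ([2,1,3] ++ List.replicate j 2) ++ [2] := by
      rw [List.append_assoc]
      simpa [List.replicate_succ'] using h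
    have := (concat_inj h2).2
    omega

lemma ne_last_Z2 (k : ℕ) (L : List ℤ) : L ++ [1] ≠ List.replicate k 2 ++ [3, 1, 2] := by
  intro h
  have h2 : L ++ [1] = (List.replicate k 2 ++ [3, 1]) ++ [2] := by
    rw [List.append_assoc]
    simpa using h
  have := (concat_inj h2).2
  omega

lemma not_both_two {L R : List ℤ}
    (hQ' : ContractsToPoint (L ++ (2 - 1 : ℤ) :: (2 - 1 : ℤ) :: R)) : False := by
  have hgood := (ctp_good hQ').2
  rw [List.Chain', List.isChain_append] at hgood
  have h2 := hgood.2.1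
  rw [List.isChain_cons_cons] at h2
  have h3 := h2.1
  omega

-- classification of contractible chains with K = 0 and a unique (-1)-curve
lemma lemZ {Q : List ℤ} (h : ContractsToPoint Q) :
    Q.count 1 = 1 → kDot Q = 0 →
    ∃ k : ℕ, Q = [2, 1, 3] ++ List.replicate k 2 ∨
      Q = List.replicate k 2 ++ [3, 1, 2] := by
  induction h using Relation.ReflTransGen.head_induction_on with
  | refl => intro hc _; simp at hc
  | head hs hQ' ih =>
    intro hc hk
    cases hs with
    | mid L R a b =>
      obtain ⟨hL, ha1, hb1, hR⟩ := count_mid hc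
      by_cases ha2 : a = 2
      · subst ha2
        by_cases hb2 : b = 2
        · subst hb2; exact absurd (not_both_two hQ') (by simp)
        · norm_num at hQ'
          obtain ⟨k, hQ | hQ⟩ := lemM hQ'
            (by
              have e1 : L.count 1 = 0 := List.count_eq_zero.mpr hL
              have e2 : R.count 1 = 0 := List.count_eq_zero.mpr hR
              simp only [List.count_append, List.count_cons, beq_iff_eq, e1, e2]
              split_ifs <;> omega)
            (by
              simp only [kDot_append, kDot_cons] at hk ⊢
              omega)
          · obtain ⟨rfl, h2⟩ := split_one hL (by simp)
              (by simpa using hQ : L ++ 1 :: (b - 1) :: R = [] ++ 1 :: List.replicate k 2)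
            cases k with
            | zero => simp at h2
            | succ j =>
              rw [List.replicate_succ] at h2
              simp only [List.cons.injEq] at h2
              refine ⟨j, Or.inl ?_⟩
              have hb3 : b = 3 := by omega
              simp [hb3, h2.2]
          · obtain ⟨-, h2⟩ := split_one hL (by simp [List.mem_replicate])
              (by simpa using hQ : L ++ 1 :: (b - 1) :: R = List.replicate k 2 ++ 1 :: [])
            simp at h2
      · have hb2 : b = 2 := by
          by_contra hb2
          have h1 := ctp_one_mem hQ' (by simp)
          simp only [List.mem_append, List.mem_cons] at h1
          rcases h1 with h1 | h1 | h1 | h1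
          · exact hL h1
          · omega
          · omega
          · exact hR h1
        subst hb2
        norm_num at hQ'
        have hL' : (1:ℤ) ∉ L ++ [a - 1] := by
          simp only [List.mem_append, List.mem_singleton, not_or]
          exact ⟨hL, by omega⟩
        obtain ⟨k, hQ | hQ⟩ := lemM hQ'
          (by
            have e1 : L.count 1 = 0 := List.count_eq_zero.mpr hL
            have e2 : R.count 1 = 0 := List.count_eq_zero.mpr hR
            simp only [List.count_append, List.count_cons, beq_iff_eq, e1, e2]
            split_ifs <;> omega)
          (by
            simp only [kDot_append, kDot_cons] at hk ⊢
            omega)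
        · obtain ⟨h1, -⟩ := split_one hL' (by simp)
            (by simpa using hQ : (L ++ [a - 1]) ++ 1 :: R = [] ++ 1 :: List.replicate k 2)
          simp at h1
        · obtain ⟨h1, rfl⟩ := split_one hL' (by simp [List.mem_replicate])
            (by simpa using hQ : (L ++ [a - 1]) ++ 1 :: R = List.replicate k 2 ++ 1 :: [])
          cases k with
          | zero => simp at h1
          | succ j =>
            rw [List.replicate_succ'] at h1
            obtain ⟨rfl, h3⟩ := concat_inj h1
            refine ⟨j, Or.inr ?_⟩
            have ha3 : a = 3 := by omega
            simp [ha3]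
    | head b R =>
      obtain ⟨hb1, hR⟩ := count_head hc
      by_cases hb2 : b = 2
      · subst hb2
        have h21 : (2:ℤ) - 1 = 1 := by norm_num
        rw [h21] at ih hQ'
        obtain ⟨k, hQ | hQ⟩ := ih
          (by simp [List.count_cons, List.count_eq_zero.mpr hR])
          (by simp only [kDot_cons] at hk ⊢; omega)
        · exact absurd hQ (ne_head_Z1 k R)
        · exact absurd hQ (ne_head_Z2 k R)
      · exfalso
        have h1 : (1:ℤ) ∈ (b - 1) :: R := ctp_one_mem hQ' (by simp)
        simp only [List.mem_cons] at h1
        rcases h1 with h1 | h1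
        · omega
        · exact hR h1
    | last L a =>
      obtain ⟨hL, ha1⟩ := count_last hc
      by_cases ha2 : a = 2
      · subst ha2
        have h21 : (2:ℤ) - 1 = 1 := by norm_num
        rw [h21] at ih hQ'
        obtain ⟨k, hQ | hQ⟩ := ih
          (by simp [List.count_append, List.count_cons, List.count_eq_zero.mpr hL])
          (by simp only [kDot_append, kDot_cons, kDot_nil] at hk ⊢; omega)
        · exact absurd hQ (ne_last_Z1 k L)
        · exact absurd hQ (ne_last_Z2 k L)
      · exfalso
        have h1 : (1:ℤ) ∈ L ++ [a - 1] := ctp_one_mem hQ' (by simp)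
        simp only [List.mem_append, List.mem_singleton] at h1
        rcases h1 with h1 | h1
        · exact hL h1
        · omega
    | single => simp [kDot] at hk

lemma coe_rep (k : ℕ) :
    ((List.replicate k 2).flatMap fun a : ℕ => [(a : ℤ)]) = List.replicate k 2 := by
  induction k with
  | zero => simp
  | succ j ih => simp [List.replicate_succ, ih]

lemma ne_one_lastcat {L M : List ℤ} {x : ℤ} (hx : x ≠ 1) : L ++ [1] ≠ M ++ [x] := by
  intro h
  have := (concat_inj h).2
  omega


/-- If a weight list contracts to a smooth point, contains a unique `(-1)`-curve
and `K·Q = 1`, then up to reversal `Q = [(2)_k, 4, 1, 2, 2]` or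
`Q = [(2)_k, 3, 2, 1, 3]` for some `k ≥ 0`. -/
theorem chain_KQ_one (Q : List ℤ) (hQ : ContractsToPoint Q)
    (huniq : Q.count 1 = 1) (hK : kDot Q = 1) :
    ∃ k : ℕ,
      (Q = List.replicate k 2 ++ [4, 1, 2, 2] ∨
        Q = (List.replicate k 2 ++ [4, 1, 2, 2]).reverse) ∨
      (Q = List.replicate k 2 ++ [3, 2, 1, 3] ∨
        Q = (List.replicate k 2 ++ [3, 2, 1, 3]).reverse) := by
  revert huniq hK
  induction hQ using Relation.ReflTransGen.head_induction_on with
  | refl => intro hc _; simp at hc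
  | head hs hQ' ih =>
    intro hc hk
    cases hs with
    | mid L R a b =>
      obtain ⟨hL, ha1, hb1, hR⟩ := count_mid hc
      by_cases ha2 : a = 2
      · subst ha2
        by_cases hb2 : b = 2
        · subst hb2; exact (not_both_two hQ').elim
        · norm_num at hQ'
          obtain ⟨k, hQ | hQ⟩ := lemZ hQ'
            (by
              have e1 : L.count 1 = 0 := List.count_eq_zero.mpr hL
              have e2 : R.count 1 = 0 := List.count_eq_zero.mpr hR
              simp only [List.count_append, List.count_cons, beq_iff_eq, e1, e2]
              split_ifs <;> omega)
            (by
              simp only [kDot_append, kDot_cons] at hk ⊢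
              omega)
          · obtain ⟨rfl, h2⟩ := split_one hL (by simp)
              (show L ++ 1 :: (b - 1) :: R = [2] ++ 1 :: (3 :: List.replicate k 2) by
                simpa using hQ)
            simp only [List.cons.injEq] at h2
            refine ⟨k, Or.inl (Or.inr ?_)⟩
            have hb4 : b = 4 := by omega
            simp [coe_rep, hb4, h2.2]
          · obtain ⟨h1, h2⟩ := split_one hL (by simp [List.mem_replicate])
              (show L ++ 1 :: (b - 1) :: R = (List.replicate k 2 ++ [3]) ++ 1 :: [2] by
                simpa using hQ)
            simp only [List.cons.injEq] at h2
            refine ⟨k, Or.inr (Or.inl ?_)⟩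
            subst h1
            have hb3 : b = 3 := by omega
            simp [hb3, h2.2]
      · have hb2 : b = 2 := by
          by_contra hb2
          have h1 := ctp_one_mem hQ' (by simp)
          simp only [List.mem_append, List.mem_cons] at h1
          rcases h1 with h1 | h1 | h1 | h1
          · exact hL h1
          · omega
          · omega
          · exact hR h1
        subst hb2
        norm_num at hQ'
        have hL' : (1:ℤ) ∉ L ++ [a - 1] := by
          simp only [List.mem_append, List.mem_singleton, not_or]
          exact ⟨hL, by omega⟩
        obtain ⟨k, hQ | hQ⟩ := lemZ hQ'
          (by
            have e1 : L.count 1 = 0 := List.count_eq_zero.mpr hL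
            have e2 : R.count 1 = 0 := List.count_eq_zero.mpr hR
            simp only [List.count_append, List.count_cons, beq_iff_eq, e1, e2]
            split_ifs <;> omega)
          (by
            simp only [kDot_append, kDot_cons] at hk ⊢
            omega)
        · obtain ⟨h1, rfl⟩ := split_one hL' (by simp)
            (show (L ++ [a - 1]) ++ 1 :: R = [2] ++ 1 :: (3 :: List.replicate k 2) by
              simpa using hQ)
          obtain ⟨rfl, h3⟩ := concat_inj (show L ++ [a - 1] = [] ++ [2] by simpa using h1)
          refine ⟨k, Or.inr (Or.inr ?_)⟩
          have ha3 : a = 3 := by omega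
          simp [coe_rep, ha3]
        · obtain ⟨h1, rfl⟩ := split_one hL' (by simp [List.mem_replicate])
            (show (L ++ [a - 1]) ++ 1 :: R = (List.replicate k 2 ++ [3]) ++ 1 :: [2] by
              simpa using hQ)
          obtain ⟨rfl, h3⟩ := concat_inj h1
          refine ⟨k, Or.inl (Or.inl ?_)⟩
          have ha4 : a = 4 := by omega
          simp [ha4]
    | head b R =>
      obtain ⟨hb1, hR⟩ := count_head hc
      by_cases hb2 : b = 2
      · subst hb2
        have h21 : (2:ℤ) - 1 = 1 := by norm_num
        rw [h21] at ih hQ'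
        obtain ⟨k, (hQ | hQ) | (hQ | hQ)⟩ := ih
          (by simp [List.count_cons, List.count_eq_zero.mpr hR])
          (by simp only [kDot_cons] at hk ⊢; omega)
        · cases k with
          | zero => simp at hQ
          | succ j => rw [List.replicate_succ] at hQ; simp at hQ
        · simp [coe_rep] at hQ
        · cases k with
          | zero => simp at hQ
          | succ j => rw [List.replicate_succ] at hQ; simp at hQ
        · simp [coe_rep] at hQ
      · exfalso
        have h1 : (1:ℤ) ∈ (b - 1) :: R := ctp_one_mem hQ' (by simp)
        simp only [List.mem_cons] at h1
        rcases h1 with h1 | h1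
        · omega
        · exact hR h1
    | last L a =>
      obtain ⟨hL, ha1⟩ := count_last hc
      by_cases ha2 : a = 2
      · subst ha2
        have h21 : (2:ℤ) - 1 = 1 := by norm_num
        rw [h21] at ih hQ'
        obtain ⟨k, (hQ | hQ) | (hQ | hQ)⟩ := ih
          (by simp [List.count_append, List.count_cons, List.count_eq_zero.mpr hL])
          (by simp only [kDot_append, kDot_cons, kDot_nil] at hk ⊢; omega)
        · exact absurd (show L ++ [1] = (List.replicate k 2 ++ [4, 1, 2]) ++ [2] by
              simpa using hQ) (ne_one_lastcat (by norm_num))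
        · simp only [List.reverse_append] at hQ
          simp [coe_rep] at hQ
          cases k with
          | zero =>
            exact absurd (show L ++ [1] = [2, 2, 1] ++ [4] by simpa using hQ)
              (ne_one_lastcat (by norm_num))
          | succ j =>
            exact absurd (show L ++ [1] = ([2, 2, 1, 4] ++ List.replicate j 2) ++ [2] by
                simpa [List.replicate_succ'] using hQ) (ne_one_lastcat (by norm_num))
        · exact absurd (show L ++ [1] = (List.replicate k 2 ++ [3, 2, 1]) ++ [3] by
              simpa using hQ) (ne_one_lastcat (by norm_num))
        · simp only [List.reverse_append] at hQ
          simp [coe_rep] at hQ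
          cases k with
          | zero =>
            exact absurd (show L ++ [1] = [3, 1, 2] ++ [3] by simpa using hQ)
              (ne_one_lastcat (by norm_num))
          | succ j =>
            exact absurd (show L ++ [1] = ([3, 1, 2, 3] ++ List.replicate j 2) ++ [2] by
                simpa [List.replicate_succ'] using hQ) (ne_one_lastcat (by norm_num))
      · exfalso
        have h1 : (1:ℤ) ∈ L ++ [a - 1] := ctp_one_mem hQ' (by simp)
        simp only [List.mem_append, List.mem_singleton] at h1
        rcases h1 with h1 | h1
        · exact hL h1
        · omega
    | single => simp [kDot] at hk
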